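/- Let W: ℝ^d → ℝ ∪ {∞} satisfy: even, bounded below, lower semicontinuous, continuous on ℝ^d∖{0} with W(0) = lim_{x→0} W(x), locally integrable, and the mollification bound (for any R > 0, the ε-ball averages of W are bounded by C_1(R) + C_2(R) W(x) for |x| < R). If ρ is a compactly supported probability measure with E[ρ] = ∞ and φ_ε is a mollifier, then lim_{ε→0} E[ρ * φ_ε] = ∞. -/
import Mathlib


open MeasureTheory Real Filter Topology Metric Set
open scoped ENNReal

noncomputable section
open Classical

def erealToENNReal (x : EReal) : ℝ≥0∞ :=
  if x = ⊤ then ⊤ else ENNReal.ofReal x.toReal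

def ennrealToEReal (x : ℝ≥0∞) : EReal :=
  if x = ⊤ then ⊤ else ((x.toReal : ℝ) : EReal)

/-- The interaction energy of a (nonnegative) measure, valued in the extended reals. -/
def interactionEnergy {d : ℕ} (W : EuclideanSpace ℝ (Fin d) → EReal)
    (ρ : Measure (EuclideanSpace ℝ (Fin d))) : EReal :=
  (((2:ℝ)⁻¹ : ℝ) : EReal) *
    (ennrealToEReal (∫⁻ p, erealToENNReal (W (p.1 - p.2)) ∂(ρ.prod ρ))
      - ennrealToEReal (∫⁻ p, erealToENNReal (-(W (p.1 - p.2))) ∂(ρ.prod ρ)))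

/-- The mollified measure `ρ * φ_ε`, i.e. the measure with density
`x ↦ ∫ ε^{-d} φ((x-y)/ε) dρ(y)` with respect to Lebesgue measure. -/
def mollifiedMeasure {d : ℕ} (φ : EuclideanSpace ℝ (Fin d) → ℝ)
    (ρ : Measure (EuclideanSpace ℝ (Fin d))) (ε : ℝ) :
    Measure (EuclideanSpace ℝ (Fin d)) :=
  volume.withDensity fun x =>
    ENNReal.ofReal (∫ y, ε ^ (-(d:ℝ)) * φ (ε⁻¹ • (x - y)) ∂ρ)

/-! ### Auxiliary lemmas -/

lemma erealToENNReal_mono : Monotone erealToENNReal := by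
  intro a b hab
  unfold erealToENNReal
  split_ifs with h1 h2 h2
  · exact le_top
  · subst h1; exact absurd (top_le_iff.mp hab) h2
  · exact le_top
  · induction a using EReal.rec with
    | bot => simp
    | top => simp at h1
    | coe a =>
      induction b using EReal.rec with
      | bot => simp [le_bot_iff] at hab
      | top => simp at h2
      | coe b =>
        exact ENNReal.ofReal_le_ofReal (by exact_mod_cast hab)

lemma ofReal_le_erealToENNReal {r : ℝ} {a : EReal} (h : (r : EReal) ≤ a) :
    ENNReal.ofReal r ≤ erealToENNReal a := by
  have : erealToENNReal (r : EReal) = ENNReal.ofReal r := by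
    simp [erealToENNReal]
  rw [← this]; exact erealToENNReal_mono h

lemma measurable_erealToENNReal : Measurable erealToENNReal := by
  unfold erealToENNReal
  refine Measurable.ite ?_ measurable_const
    (ENNReal.measurable_ofReal.comp measurable_ereal_toReal)
  rw [show {x : EReal | x = ⊤} = {(⊤ : EReal)} from by ext x; simp]
  exact measurableSet_singleton _

lemma erealToENNReal_eq_top_iff {a : EReal} : erealToENNReal a = ⊤ ↔ a = ⊤ := by
  unfold erealToENNReal; split_ifs with h <;> simp [h, ENNReal.ofReal_ne_top]

lemma ennrealToEReal_eq_top_iff {a : ℝ≥0∞} : ennrealToEReal a = ⊤ ↔ a = ⊤ := by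
  unfold ennrealToEReal; split_ifs with h <;> simp [h, EReal.coe_ne_top]

lemma ennrealToEReal_nonneg (a : ℝ≥0∞) : 0 ≤ ennrealToEReal a := by
  unfold ennrealToEReal; split_ifs with h
  · exact le_top
  · exact_mod_cast ENNReal.toReal_nonneg

lemma ennrealToEReal_mono : Monotone ennrealToEReal := by
  intro a b hab
  unfold ennrealToEReal
  split_ifs with h1 h2 h2
  · exact le_top
  · exact absurd (top_le_iff.mp (h1 ▸ hab)) h2
  · exact le_top
  · exact_mod_cast ENNReal.toReal_mono h2 hab

lemma lsc_comp {X : Type*} [TopologicalSpace X] {W : X → EReal}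
    (hlsc : LowerSemicontinuous W) :
    LowerSemicontinuous (fun x => erealToENNReal (W x)) := by
  intro x y hy
  simp only [] at hy ⊢
  change y < erealToENNReal (W x) at hy
  by_cases htop : W x = ⊤
  · have hyne : y ≠ ⊤ := (ne_top_of_lt hy)
    set r : ℝ := y.toReal + 1 with hr
    have hrpos : 0 < r := by positivity
    have hyr : y < ENNReal.ofReal r := by
      rw [hr]
      exact (ENNReal.lt_ofReal_iff_toReal_lt hyne).mpr (by linarith)
    have : ((r : EReal)) < W x := by rw [htop]; exact EReal.coe_lt_top r
    filter_upwards [hlsc x _ this] with z hz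
    exact lt_of_lt_of_le hyr (ofReal_le_erealToENNReal hz.le)
  · have hval : erealToENNReal (W x) = ENNReal.ofReal (W x).toReal := by
      simp [erealToENNReal, htop]
    rw [hval] at hy
    have hyne : y ≠ ⊤ := (ne_top_of_lt hy)
    set t : ℝ := (W x).toReal with ht
    have hyt : y.toReal < t := by
      have := (ENNReal.lt_ofReal_iff_toReal_lt hyne).mp hy
      exact this
    have htpos : 0 < t := lt_of_le_of_lt ENNReal.toReal_nonneg hyt
    have hbotne : W x ≠ ⊥ := by
      intro hbot
      rw [ht, hbot] at hyt; simp only [EReal.toReal_bot] at hyt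
      exact absurd hyt (not_lt.mpr ENNReal.toReal_nonneg)
    have hWx : W x = ((t : ℝ) : EReal) := by
      rw [ht]; exact (EReal.coe_toReal htop hbotne).symm
    set s : ℝ := (y.toReal + t) / 2 with hs
    have hs1 : y.toReal < s := by rw [hs]; linarith
    have hs2 : s < t := by rw [hs]; linarith
    have hys : y < ENNReal.ofReal s :=
      (ENNReal.lt_ofReal_iff_toReal_lt hyne).mpr hs1
    have : ((s : EReal)) < W x := by rw [hWx]; exact_mod_cast hs2
    filter_upwards [hlsc x _ this] with z hz
    exact lt_of_lt_of_le hys (ofReal_le_erealToENNReal hz.le)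

lemma lsc_le_liminf_seq {X : Type*} [TopologicalSpace X] {f : X → ℝ≥0∞}
    (hf : LowerSemicontinuous f) {x : X} {u : ℕ → X}
    (hu : Tendsto u atTop (nhds x)) :
    f x ≤ liminf (fun n => f (u n)) atTop := by
  refine (le_liminf_iff).mpr fun y hy => hu.eventually (hf x y hy)

lemma lintegral_comp_shift_smul {d : ℕ} (f : EuclideanSpace ℝ (Fin d) → ℝ≥0∞)
    (hf : Measurable f) {ε : ℝ} (hε : 0 < ε) (y : EuclideanSpace ℝ (Fin d)) :
    ∫⁻ x, f (ε⁻¹ • (x - y)) = ENNReal.ofReal (ε ^ d) * ∫⁻ x, f x := by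
  have h1 : ∫⁻ x, f (ε⁻¹ • (x - y)) = ∫⁻ x, f (ε⁻¹ • x) :=
    lintegral_sub_right_eq_self (fun x => f (ε⁻¹ • x)) y
  rw [h1]
  have hmap := Measure.map_addHaar_smul (volume : Measure (EuclideanSpace ℝ (Fin d)))
    (inv_ne_zero hε.ne')
  have h2 : ∫⁻ x, f (ε⁻¹ • x) = ∫⁻ z, f z ∂(Measure.map (ε⁻¹ • · ) volume) :=
    (lintegral_map hf (measurable_const_smul ε⁻¹)).symm
  rw [h2, hmap, lintegral_smul_measure]
  congr 1
  rw [finrank_euclideanSpace, Fintype.card_fin]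
  rw [abs_of_pos (by positivity), ← inv_pow, inv_inv]

lemma rpow_neg_d_mul {d : ℕ} {ε : ℝ} (hε : 0 < ε) : ε ^ (-(d:ℝ)) * ε ^ d = 1 := by
  rw [Real.rpow_neg hε.le, Real.rpow_natCast, inv_mul_cancel₀ (by positivity)]

section MainAux

variable {d : ℕ} {φ : EuclideanSpace ℝ (Fin d) → ℝ}
  {ρ : Measure (EuclideanSpace ℝ (Fin d))}

variable (hφc : Continuous φ) (hφpos : ∀ x, 0 ≤ φ x)
    (hφsupp : tsupport φ ⊆ closedBall (0 : EuclideanSpace ℝ (Fin d)) 1)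
    (hφrad : ∀ x y : EuclideanSpace ℝ (Fin d), ‖x‖ ≤ ‖y‖ → φ y ≤ φ x)
    (hφint : ∫ x, φ x = 1) [IsProbabilityMeasure ρ]

include hφc hφsupp hφint hφpos in
lemma lintegral_ofReal_phi : ∫⁻ x, ENNReal.ofReal (φ x) = 1 := by
  have hcs : HasCompactSupport φ :=
    IsCompact.of_isClosed_subset (isCompact_closedBall 0 1) (isClosed_tsupport φ) hφsupp
  have hint : Integrable φ := hφc.integrable_of_hasCompactSupport hcs
  rw [← ofReal_integral_eq_lintegral_ofReal hint (Filter.Eventually.of_forall hφpos), hφint,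
    ENNReal.ofReal_one]

include hφc hφrad hφpos in
lemma dens_eq_lintegral' {ε : ℝ} (hε : 0 < ε) (x : EuclideanSpace ℝ (Fin d)) :
    ENNReal.ofReal (∫ y, ε ^ (-(d:ℝ)) * φ (ε⁻¹ • (x - y)) ∂ρ)
      = ∫⁻ y, ENNReal.ofReal (ε ^ (-(d:ℝ)) * φ (ε⁻¹ • (x - y))) ∂ρ := by
  have hcont : Continuous fun y => ε ^ (-(d:ℝ)) * φ (ε⁻¹ • (x - y)) :=
    continuous_const.mul (hφc.comp ((continuous_const.sub continuous_id).const_smul ε⁻¹))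
  have hbd : ∀ y, ‖ε ^ (-(d:ℝ)) * φ (ε⁻¹ • (x - y))‖ ≤ ε ^ (-(d:ℝ)) * φ 0 := by
    intro y
    have h0 : (0:ℝ) ≤ ε ^ (-(d:ℝ)) := (Real.rpow_pos_of_pos hε _).le
    rw [Real.norm_eq_abs, abs_of_nonneg (mul_nonneg h0 (hφpos _))]
    exact mul_le_mul_of_nonneg_left (hφrad 0 _ (by simp)) h0
  have hint : Integrable (fun y => ε ^ (-(d:ℝ)) * φ (ε⁻¹ • (x - y))) ρ := by
    refine Integrable.mono' (integrable_const (ε ^ (-(d:ℝ)) * φ 0)) hcont.aestronglyMeasurable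
      (Filter.Eventually.of_forall hbd)
  exact ofReal_integral_eq_lintegral_ofReal hint
    (Filter.Eventually.of_forall fun y =>
      mul_nonneg (Real.rpow_pos_of_pos hε _).le (hφpos _))

include hφc in
lemma dens_meas (ε : ℝ) :
    Measurable fun x : EuclideanSpace ℝ (Fin d) =>
      ENNReal.ofReal (∫ y, ε ^ (-(d:ℝ)) * φ (ε⁻¹ • (x - y)) ∂ρ) := by
  have hsm : StronglyMeasurable fun q : EuclideanSpace ℝ (Fin d) × EuclideanSpace ℝ (Fin d) =>
      ε ^ (-(d:ℝ)) * φ (ε⁻¹ • (q.1 - q.2)) :=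
    (continuous_const.mul (hφc.comp
      ((continuous_fst.sub continuous_snd).const_smul ε⁻¹))).stronglyMeasurable
  exact ENNReal.measurable_ofReal.comp hsm.integral_prod_right'.measurable

include hφc hφrad hφpos hφsupp hφint in
lemma mollified_mass {ε : ℝ} (hε : 0 < ε) :
    (mollifiedMeasure φ ρ ε) Set.univ = 1 := by
  rw [mollifiedMeasure, withDensity_apply _ MeasurableSet.univ, Measure.restrict_univ,
    ← setLIntegral_univ]
  rw [setLIntegral_univ]
  calc ∫⁻ x, ENNReal.ofReal (∫ y, ε ^ (-(d:ℝ)) * φ (ε⁻¹ • (x - y)) ∂ρ)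
      = ∫⁻ x, ∫⁻ y, ENNReal.ofReal (ε ^ (-(d:ℝ)) * φ (ε⁻¹ • (x - y))) ∂ρ := by
        simp_rw [dens_eq_lintegral' hφc hφpos hφrad hε]
    _ = ∫⁻ y, ∫⁻ x, ENNReal.ofReal (ε ^ (-(d:ℝ)) * φ (ε⁻¹ • (x - y))) ∂volume ∂ρ := by
        apply lintegral_lintegral_swap
        apply Measurable.aemeasurable
        apply ENNReal.measurable_ofReal.comp
        exact (continuous_const.mul (hφc.comp
          ((continuous_fst.sub continuous_snd).const_smul ε⁻¹))).measurable
    _ = ∫⁻ y, ENNReal.ofReal (ε ^ (-(d:ℝ))) * ∫⁻ x, ENNReal.ofReal (φ (ε⁻¹ • (x - y))) ∂volume ∂ρ := by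
        apply lintegral_congr; intro y
        simp_rw [ENNReal.ofReal_mul (Real.rpow_pos_of_pos hε _).le]
        rw [lintegral_const_mul' _ _ ENNReal.ofReal_ne_top]
    _ = ∫⁻ (_ : EuclideanSpace ℝ (Fin d)),
          ENNReal.ofReal (ε ^ (-(d:ℝ))) * (ENNReal.ofReal (ε ^ d) * 1) ∂ρ := by
        apply lintegral_congr; intro y
        rw [lintegral_comp_shift_smul (fun v => ENNReal.ofReal (φ v))
          (ENNReal.measurable_ofReal.comp hφc.measurable) hε,
          lintegral_ofReal_phi hφc hφpos hφsupp hφint]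
    _ = 1 := by
        rw [mul_one, ← ENNReal.ofReal_mul (Real.rpow_pos_of_pos hε _).le,
          rpow_neg_d_mul hε, ENNReal.ofReal_one, lintegral_const, measure_univ, mul_one]

include hφc hφpos hφrad in
lemma conv_step {ε : ℝ} (hε : 0 < ε) (B : EuclideanSpace ℝ (Fin d) → ℝ≥0∞)
    (hB : Measurable B) :
    ∫⁻ x, ENNReal.ofReal (∫ y, ε ^ (-(d:ℝ)) * φ (ε⁻¹ • (x - y)) ∂ρ) * B x
      = ∫⁻ y, ∫⁻ u, ENNReal.ofReal (φ u) * B (y + ε • u) ∂volume ∂ρ := by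
  have hκm : Measurable fun q : EuclideanSpace ℝ (Fin d) × EuclideanSpace ℝ (Fin d) =>
      ENNReal.ofReal (ε ^ (-(d:ℝ)) * φ (ε⁻¹ • (q.1 - q.2))) :=
    ENNReal.measurable_ofReal.comp (continuous_const.mul (hφc.comp
      ((continuous_fst.sub continuous_snd).const_smul ε⁻¹))).measurable
  calc ∫⁻ x, ENNReal.ofReal (∫ y, ε ^ (-(d:ℝ)) * φ (ε⁻¹ • (x - y)) ∂ρ) * B x
      = ∫⁻ x, ∫⁻ y, ENNReal.ofReal (ε ^ (-(d:ℝ)) * φ (ε⁻¹ • (x - y))) * B x ∂ρ ∂volume := by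
        apply lintegral_congr; intro x
        rw [dens_eq_lintegral' hφc hφpos hφrad hε,
          lintegral_mul_const (f := fun y => ENNReal.ofReal (ε ^ (-(d:ℝ)) * φ (ε⁻¹ • (x - y))))
            (B x) (ENNReal.measurable_ofReal.comp (continuous_const.mul
            (hφc.comp ((continuous_const.sub continuous_id).const_smul ε⁻¹))).measurable)]
    _ = ∫⁻ y, ∫⁻ x, ENNReal.ofReal (ε ^ (-(d:ℝ)) * φ (ε⁻¹ • (x - y))) * B x ∂volume ∂ρ := by
        apply lintegral_lintegral_swap
        exact (hκm.mul (hB.comp measurable_fst)).aemeasurable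
    _ = ∫⁻ y, ∫⁻ u, ENNReal.ofReal (φ u) * B (y + ε • u) ∂volume ∂ρ := by
        apply lintegral_congr; intro y
        have hg : Measurable fun u => ENNReal.ofReal (ε ^ (-(d:ℝ)) * φ u) * B (y + ε • u) := by
          refine Measurable.mul ?_ (hB.comp (by fun_prop))
          exact ENNReal.measurable_ofReal.comp (continuous_const.mul hφc).measurable
        have h1 : ∀ x, ENNReal.ofReal (ε ^ (-(d:ℝ)) * φ (ε⁻¹ • (x - y))) * B x
            = (fun u => ENNReal.ofReal (ε ^ (-(d:ℝ)) * φ u) * B (y + ε • u)) (ε⁻¹ • (x - y)) := by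
          intro x
          simp only []
          congr 2
          rw [smul_smul, mul_inv_cancel₀ hε.ne', one_smul]
          abel
        rw [lintegral_congr h1,
          lintegral_comp_shift_smul _ hg hε]
        simp_rw [ENNReal.ofReal_mul (Real.rpow_pos_of_pos hε _).le, mul_assoc]
        rw [lintegral_const_mul' _ _ ENNReal.ofReal_ne_top, ← mul_assoc,
          ← ENNReal.ofReal_mul (by positivity), mul_comm (ε ^ d), rpow_neg_d_mul hε,
          ENNReal.ofReal_one, one_mul]

include hφc hφpos hφrad in
lemma key_identity (Wp : EuclideanSpace ℝ (Fin d) → ℝ≥0∞) (hWp : Measurable Wp)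
    {ε : ℝ} (hε : 0 < ε) :
    ∫⁻ p, Wp (p.1 - p.2) ∂((mollifiedMeasure φ ρ ε).prod (mollifiedMeasure φ ρ ε))
      = ∫⁻ y, ∫⁻ y', ∫⁻ u, ∫⁻ v, ENNReal.ofReal (φ u) *
          (ENNReal.ofReal (φ v) * Wp (y - y' + ε • u - ε • v)) ∂volume ∂volume ∂ρ ∂ρ := by
  have hφm : Measurable φ := hφc.measurable
  set ν := mollifiedMeasure φ ρ ε with hν
  set D : EuclideanSpace ℝ (Fin d) → ℝ≥0∞ :=
    fun x => ENNReal.ofReal (∫ y, ε ^ (-(d:ℝ)) * φ (ε⁻¹ • (x - y)) ∂ρ) with hD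
  have hDm : Measurable D := dens_meas hφc ε
  have hνd : ν = volume.withDensity D := rfl
  set A' : EuclideanSpace ℝ (Fin d) → ℝ≥0∞ := fun x => ∫⁻ y', ∫⁻ v,
      ENNReal.ofReal (φ v) * Wp (x - (y' + ε • v)) ∂volume ∂ρ with hA'
  have m1 : Measurable fun q : (EuclideanSpace ℝ (Fin d) × EuclideanSpace ℝ (Fin d)) ×
      EuclideanSpace ℝ (Fin d) => ENNReal.ofReal (φ q.2) * Wp (q.1.1 - (q.1.2 + ε • q.2)) := by
    fun_prop
  have m2 : Measurable fun q : EuclideanSpace ℝ (Fin d) × EuclideanSpace ℝ (Fin d) =>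
      ∫⁻ v, ENNReal.ofReal (φ v) * Wp (q.1 - (q.2 + ε • v)) ∂volume := m1.lintegral_prod_right'
  have hA'm : Measurable A' := m2.lintegral_prod_right'
  haveI : SFinite ν := by rw [hνd]; infer_instance
  have step1 : ∫⁻ p, Wp (p.1 - p.2) ∂(ν.prod ν) = ∫⁻ x, ∫⁻ x', Wp (x - x') ∂ν ∂ν :=
    lintegral_prod _ (hWp.comp (measurable_fst.sub measurable_snd)).aemeasurable
  have step2 : ∀ x, ∫⁻ x', Wp (x - x') ∂ν = A' x := by
    intro x
    rw [hνd, lintegral_withDensity_eq_lintegral_mul volume hDm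
      (g := fun x' => Wp (x - x')) (hWp.comp (measurable_const.sub measurable_id))]
    have : ∀ x', (D * fun x' => Wp (x - x')) x' = D x' * Wp (x - x') := fun _ => rfl
    rw [lintegral_congr this, conv_step hφc hφpos hφrad hε (fun x' => Wp (x - x'))
      (hWp.comp (measurable_const.sub measurable_id))]
  have step3 : ∫⁻ x, ∫⁻ x', Wp (x - x') ∂ν ∂ν = ∫⁻ y, ∫⁻ u,
      ENNReal.ofReal (φ u) * A' (y + ε • u) ∂volume ∂ρ := by
    rw [lintegral_congr step2, hνd, lintegral_withDensity_eq_lintegral_mul volume hDm hA'm]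
    exact conv_step hφc hφpos hφrad hε A' hA'm
  rw [step1, step3]
  apply lintegral_congr; intro y
  calc ∫⁻ u, ENNReal.ofReal (φ u) * A' (y + ε • u) ∂volume
      = ∫⁻ u, ∫⁻ y', ENNReal.ofReal (φ u) * (∫⁻ v,
          ENNReal.ofReal (φ v) * Wp (y + ε • u - (y' + ε • v)) ∂volume) ∂ρ ∂volume := by
        apply lintegral_congr; intro u
        simp only [hA']
        exact (lintegral_const_mul' _ _ ENNReal.ofReal_ne_top).symm
    _ = ∫⁻ y', ∫⁻ u, ENNReal.ofReal (φ u) * (∫⁻ v,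
          ENNReal.ofReal (φ v) * Wp (y + ε • u - (y' + ε • v)) ∂volume) ∂volume ∂ρ := by
        apply lintegral_lintegral_swap
        have m3 : Measurable fun q : (EuclideanSpace ℝ (Fin d) × EuclideanSpace ℝ (Fin d)) ×
            EuclideanSpace ℝ (Fin d) => ENNReal.ofReal (φ q.2) *
              Wp (y + ε • q.1.1 - (q.1.2 + ε • q.2)) := by fun_prop
        exact ((ENNReal.measurable_ofReal.comp (hφm.comp measurable_fst)).mul
          m3.lintegral_prod_right').aemeasurable
    _ = ∫⁻ y', ∫⁻ u, ∫⁻ v, ENNReal.ofReal (φ u) *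
          (ENNReal.ofReal (φ v) * Wp (y - y' + ε • u - ε • v)) ∂volume ∂volume ∂ρ := by
        apply lintegral_congr; intro y'
        apply lintegral_congr; intro u
        rw [← lintegral_const_mul' _ _ ENNReal.ofReal_ne_top]
        apply lintegral_congr; intro v
        have harg : y + ε • u - (y' + ε • v) = y - y' + ε • u - ε • v := by abel
        rw [harg]

lemma pointwise_liminf (hφm : Measurable φ)
    (hφ1 : ∫⁻ x, ENNReal.ofReal (φ x) = 1)
    (Wp : EuclideanSpace ℝ (Fin d) → ℝ≥0∞) (hWp : Measurable Wp)
    (hWlsc : LowerSemicontinuous Wp)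
    {e : ℕ → ℝ} (he : Tendsto e atTop (nhds 0)) (z : EuclideanSpace ℝ (Fin d)) :
    Wp z ≤ liminf (fun n => ∫⁻ u, ∫⁻ v, ENNReal.ofReal (φ u) *
      (ENNReal.ofReal (φ v) * Wp (z + e n • u - e n • v)) ∂volume ∂volume) atTop := by
  have hz : ∀ u v : EuclideanSpace ℝ (Fin d),
      Tendsto (fun n => z + e n • u - e n • v) atTop (nhds z) := by
    intro u v
    have h1 : Tendsto (fun n => e n • u) atTop (nhds 0) := by
      simpa using he.smul_const u
    have h2 : Tendsto (fun n => e n • v) atTop (nhds 0) := by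
      simpa using he.smul_const v
    simpa using (tendsto_const_nhds (x := z)).add h1 |>.sub h2
  have hpt : ∀ (c : ℝ≥0∞) (u v : EuclideanSpace ℝ (Fin d)),
      c * Wp z ≤ liminf (fun n => c * Wp (z + e n • u - e n • v)) atTop := by
    intro c u v
    calc c * Wp z ≤ liminf (fun _ : ℕ => c) atTop *
          liminf (fun n => Wp (z + e n • u - e n • v)) atTop := by
          rw [liminf_const]
          exact mul_le_mul_right (lsc_le_liminf_seq hWlsc (hz u v)) c
      _ ≤ liminf ((fun _ : ℕ => c) * fun n => Wp (z + e n • u - e n • v)) atTop :=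
          ENNReal.le_liminf_mul
      _ = liminf (fun n => c * Wp (z + e n • u - e n • v)) atTop := rfl
  have mInner : ∀ n u, Measurable fun v => ENNReal.ofReal (φ u) *
      (ENNReal.ofReal (φ v) * Wp (z + e n • u - e n • v)) := by
    intro n u; fun_prop
  have mOuter : ∀ n, Measurable fun u : EuclideanSpace ℝ (Fin d) => ∫⁻ v,
      ENNReal.ofReal (φ u) * (ENNReal.ofReal (φ v) * Wp (z + e n • u - e n • v)) ∂volume := by
    intro n
    have : Measurable fun q : EuclideanSpace ℝ (Fin d) × EuclideanSpace ℝ (Fin d) =>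
        ENNReal.ofReal (φ q.1) * (ENNReal.ofReal (φ q.2) * Wp (z + e n • q.1 - e n • q.2)) := by
      fun_prop
    exact this.lintegral_prod_right'
  have hinner : ∀ u : EuclideanSpace ℝ (Fin d), ENNReal.ofReal (φ u) * Wp z ≤
      liminf (fun n => ∫⁻ v, ENNReal.ofReal (φ u) *
        (ENNReal.ofReal (φ v) * Wp (z + e n • u - e n • v)) ∂volume) atTop := by
    intro u
    have h1 : ∫⁻ v, liminf (fun n => ENNReal.ofReal (φ u) *
        (ENNReal.ofReal (φ v) * Wp (z + e n • u - e n • v))) atTop ∂volume ≤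
        liminf (fun n => ∫⁻ v, ENNReal.ofReal (φ u) *
          (ENNReal.ofReal (φ v) * Wp (z + e n • u - e n • v)) ∂volume) atTop :=
      lintegral_liminf_le' fun n => (mInner n u).aemeasurable
    refine le_trans ?_ h1
    have h2 : ∫⁻ v, ENNReal.ofReal (φ u) * (ENNReal.ofReal (φ v) * Wp z) ∂volume ≤
        ∫⁻ v, liminf (fun n => ENNReal.ofReal (φ u) *
          (ENNReal.ofReal (φ v) * Wp (z + e n • u - e n • v))) atTop ∂volume := by
      apply lintegral_mono; intro v
      have := hpt (ENNReal.ofReal (φ u) * ENNReal.ofReal (φ v)) u v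
      simpa [mul_assoc] using this
    refine le_trans (le_of_eq ?_) h2
    rw [lintegral_const_mul' _ _ ENNReal.ofReal_ne_top,
      lintegral_mul_const (f := fun v => ENNReal.ofReal (φ v)) (Wp z)
      (ENNReal.measurable_ofReal.comp hφm), hφ1, one_mul]
  have h3 : ∫⁻ u, liminf (fun n => ∫⁻ v, ENNReal.ofReal (φ u) *
      (ENNReal.ofReal (φ v) * Wp (z + e n • u - e n • v)) ∂volume) atTop ∂volume ≤
      liminf (fun n => ∫⁻ u, ∫⁻ v, ENNReal.ofReal (φ u) *
        (ENNReal.ofReal (φ v) * Wp (z + e n • u - e n • v)) ∂volume ∂volume) atTop :=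
    lintegral_liminf_le' fun n => (mOuter n).aemeasurable
  refine le_trans ?_ (le_trans (lintegral_mono hinner) h3)
  rw [lintegral_mul_const (f := fun v => ENNReal.ofReal (φ v)) (Wp z)
    (ENNReal.measurable_ofReal.comp hφm), hφ1, one_mul]

end MainAux

lemma pos_part_eq_top {d : ℕ} {W : EuclideanSpace ℝ (Fin d) → EReal}
    {ρ : Measure (EuclideanSpace ℝ (Fin d))}
    (hρE : interactionEnergy W ρ = ⊤) :
    ∫⁻ p, erealToENNReal (W (p.1 - p.2)) ∂(ρ.prod ρ) = ⊤ := by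
  by_contra h
  rw [interactionEnergy] at hρE
  set A := ennrealToEReal (∫⁻ p, erealToENNReal (W (p.1 - p.2)) ∂(ρ.prod ρ)) with hA
  set B := ennrealToEReal (∫⁻ p, erealToENNReal (-(W (p.1 - p.2))) ∂(ρ.prod ρ)) with hB
  have hAne : A ≠ ⊤ := fun hc => h (ennrealToEReal_eq_top_iff.mp hc)
  have hX : A - B ≠ ⊤ := by
    have h1 : A - B ≤ A - 0 := EReal.sub_le_sub le_rfl (ennrealToEReal_nonneg _)
    rw [sub_zero] at h1
    exact fun hc => hAne (top_le_iff.mp (hc ▸ h1))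
  have key : ∀ X : EReal, X ≠ ⊤ → ((((2:ℝ)⁻¹ : ℝ)) : EReal) * X ≠ ⊤ := by
    intro X
    induction X using EReal.rec with
    | bot =>
      intro _
      rw [show ((((2:ℝ)⁻¹ : ℝ)) : EReal) * ⊥ = ⊥ from
        EReal.coe_mul_bot_of_pos (by norm_num)]
      simp
    | coe x =>
      intro _
      rw [← EReal.coe_mul]
      exact EReal.coe_ne_top _
    | top => exact fun hc => absurd rfl hc
  exact key _ hX hρE

lemma energy_lower_bound (A B : ℝ≥0∞) (a b : ℝ) (ha : 0 ≤ a) (hb : 0 ≤ b)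
    (hA : ENNReal.ofReal a ≤ A) (hB : B ≤ ENNReal.ofReal b) :
    (((a - b) / 2 : ℝ) : EReal) ≤
      (((2:ℝ)⁻¹ : ℝ) : EReal) * (ennrealToEReal A - ennrealToEReal B) := by
  have h1 : (a : EReal) ≤ ennrealToEReal A := by
    have := ennrealToEReal_mono hA
    rwa [show ennrealToEReal (ENNReal.ofReal a) = (a : EReal) from by
      simp [ennrealToEReal, ENNReal.ofReal_ne_top, ENNReal.toReal_ofReal ha]] at this
  have h2 : ennrealToEReal B ≤ (b : EReal) := by
    have := ennrealToEReal_mono hB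
    rwa [show ennrealToEReal (ENNReal.ofReal b) = (b : EReal) from by
      simp [ennrealToEReal, ENNReal.ofReal_ne_top, ENNReal.toReal_ofReal hb]] at this
  have hsub : ((a - b : ℝ) : EReal) ≤ ennrealToEReal A - ennrealToEReal B := by
    rw [EReal.coe_sub]
    exact EReal.sub_le_sub h1 h2
  have hmul := mul_le_mul_of_nonneg_right hsub
    (EReal.coe_nonneg.mpr (by norm_num : (0:ℝ) ≤ (2:ℝ)⁻¹))
  calc (((a - b) / 2 : ℝ) : EReal) = ((a - b : ℝ) : EReal) * (((2:ℝ)⁻¹ : ℝ) : EReal) := by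
        rw [← EReal.coe_mul]; norm_num [div_eq_mul_inv]
    _ ≤ (ennrealToEReal A - ennrealToEReal B) * (((2:ℝ)⁻¹ : ℝ) : EReal) := hmul
    _ = (((2:ℝ)⁻¹ : ℝ) : EReal) * (ennrealToEReal A - ennrealToEReal B) := mul_comm _ _

/-- If `W` satisfies (W0), (W1) and `ρ` is a compactly supported probability measure
with `E[ρ] = ∞`, then `E[ρ * φ_ε] → ∞` as `ε → 0⁺`. -/
theorem mollified_energy_tendsto_top
    {d : ℕ} (hd : 0 < d) (W : EuclideanSpace ℝ (Fin d) → EReal)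
    (heven : ∀ x, W (-x) = W x)
    (hlsc : LowerSemicontinuous W)
    (hbdd : ∃ m : ℝ, ∀ x, (m : EReal) ≤ W x)
    (hloc : LocallyIntegrable (fun x => (W x).toReal) volume)
    (hcont : ContinuousOn W {(0 : EuclideanSpace ℝ (Fin d))}ᶜ)
    (hW0 : Tendsto W (nhdsWithin 0 {(0 : EuclideanSpace ℝ (Fin d))}ᶜ) (nhds (W 0)))
    (hmoll : ∀ R : ℝ, 0 < R → ∃ C₁ C₂ : ℝ,
      ∀ x : EuclideanSpace ℝ (Fin d), ‖x‖ < R → ∀ ε : ℝ, 0 < ε → ε < 1 →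
        ((((volume (ball x ε)).toReal)⁻¹ *
            ∫ y in ball x ε, (W y).toReal : ℝ) : EReal) ≤ (C₁ : EReal) + (C₂ : EReal) * W x)
    (φ : EuclideanSpace ℝ (Fin d) → ℝ)
    (hφsmooth : ContDiff ℝ (⊤ : ℕ∞) φ) (hφpos : ∀ x, 0 ≤ φ x)
    (hφsupp : tsupport φ ⊆ closedBall (0 : EuclideanSpace ℝ (Fin d)) 1)
    (hφrad : ∀ x y : EuclideanSpace ℝ (Fin d), ‖x‖ ≤ ‖y‖ → φ y ≤ φ x)
    (hφint : ∫ x, φ x = 1)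
    (ρ : Measure (EuclideanSpace ℝ (Fin d))) (hρ : IsProbabilityMeasure ρ)
    (hρcpt : ∃ K : Set (EuclideanSpace ℝ (Fin d)), IsCompact K ∧ ρ Kᶜ = 0)
    (hρE : interactionEnergy W ρ = ⊤) :
    Tendsto (fun ε : ℝ => interactionEnergy W (mollifiedMeasure φ ρ ε))
      (nhdsWithin 0 (Ioi (0:ℝ))) (nhds (⊤ : EReal)) := by
  obtain ⟨m, hm⟩ := hbdd
  have hφc : Continuous φ := hφsmooth.continuous
  have hφm : Measurable φ := hφc.measurable
  set Wp : EuclideanSpace ℝ (Fin d) → ℝ≥0∞ := fun z => erealToENNReal (W z) with hWpdef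
  have hWpm : Measurable Wp := measurable_erealToENNReal.comp hlsc.measurable
  have hWplsc : LowerSemicontinuous Wp := lsc_comp hlsc
  have hφ1 : ∫⁻ x, ENNReal.ofReal (φ x) = 1 :=
    lintegral_ofReal_phi hφc hφpos hφsupp hφint
  have hP : ∫⁻ p, Wp (p.1 - p.2) ∂(ρ.prod ρ) = ⊤ := pos_part_eq_top hρE
  -- negative-part bound
  have hneg : ∀ {ε : ℝ}, 0 < ε →
      ∫⁻ p, erealToENNReal (-(W (p.1 - p.2)))
        ∂((mollifiedMeasure φ ρ ε).prod (mollifiedMeasure φ ρ ε)) ≤ ENNReal.ofReal |m| := by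
    intro ε hε
    haveI : IsProbabilityMeasure (mollifiedMeasure φ ρ ε) :=
      ⟨mollified_mass hφc hφpos hφsupp hφrad hφint hε⟩
    have hpt : ∀ z : EuclideanSpace ℝ (Fin d),
        erealToENNReal (-(W z)) ≤ ENNReal.ofReal |m| := by
      intro z
      have h1 : -(W z) ≤ ((|m| : ℝ) : EReal) := by
        calc -(W z) ≤ -((m : ℝ) : EReal) := EReal.neg_le_neg_iff.mpr (hm z)
          _ = ((-m : ℝ) : EReal) := by rw [EReal.coe_neg]
          _ ≤ ((|m| : ℝ) : EReal) := by exact_mod_cast neg_le_abs m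
      calc erealToENNReal (-(W z)) ≤ erealToENNReal ((|m| : ℝ) : EReal) :=
            erealToENNReal_mono h1
        _ = ENNReal.ofReal |m| := by
            simp [erealToENNReal, EReal.coe_ne_top, EReal.toReal_coe]
    calc ∫⁻ p, erealToENNReal (-(W (p.1 - p.2)))
          ∂((mollifiedMeasure φ ρ ε).prod (mollifiedMeasure φ ρ ε))
        ≤ ∫⁻ _, ENNReal.ofReal |m|
          ∂((mollifiedMeasure φ ρ ε).prod (mollifiedMeasure φ ρ ε)) :=
          lintegral_mono fun p => hpt _
      _ = ENNReal.ofReal |m| := by rw [lintegral_const, measure_univ, mul_one]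
  -- sequential criterion
  rw [tendsto_iff_seq_tendsto]
  intro e he
  have hepos : ∀ᶠ n in atTop, 0 < e n := by
    have := he self_mem_nhdsWithin
    filter_upwards [this] with n hn using hn
  have he0 : Tendsto e atTop (nhds 0) := he.mono_right nhdsWithin_le_nhds
  -- liminf of Q is ⊤
  have gm : ∀ n : ℕ, Measurable fun p : EuclideanSpace ℝ (Fin d) × EuclideanSpace ℝ (Fin d) =>
      ∫⁻ u, ∫⁻ v, ENNReal.ofReal (φ u) *
        (ENNReal.ofReal (φ v) * Wp (p.1 - p.2 + e n • u - e n • v)) ∂volume ∂volume := by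
    intro n
    have k1 : Measurable fun q : ((EuclideanSpace ℝ (Fin d) × EuclideanSpace ℝ (Fin d)) ×
        EuclideanSpace ℝ (Fin d)) × EuclideanSpace ℝ (Fin d) =>
        ENNReal.ofReal (φ q.1.2) * (ENNReal.ofReal (φ q.2) *
          Wp (q.1.1.1 - q.1.1.2 + e n • q.1.2 - e n • q.2)) := by fun_prop
    exact k1.lintegral_prod_right'.lintegral_prod_right'
  set Q : ℕ → ℝ≥0∞ := fun n => ∫⁻ p, (∫⁻ u, ∫⁻ v, ENNReal.ofReal (φ u) *
      (ENNReal.ofReal (φ v) * Wp (p.1 - p.2 + e n • u - e n • v)) ∂volume ∂volume)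
      ∂(ρ.prod ρ) with hQ
  have hQliminf : (⊤ : ℝ≥0∞) ≤ liminf Q atTop := by
    calc (⊤ : ℝ≥0∞) = ∫⁻ p, Wp (p.1 - p.2) ∂(ρ.prod ρ) := hP.symm
      _ ≤ ∫⁻ p, liminf (fun n => ∫⁻ u, ∫⁻ v, ENNReal.ofReal (φ u) *
            (ENNReal.ofReal (φ v) * Wp (p.1 - p.2 + e n • u - e n • v)) ∂volume ∂volume) atTop
            ∂(ρ.prod ρ) := by
          apply lintegral_mono; intro p
          exact pointwise_liminf hφm hφ1 Wp hWpm hWplsc he0 (p.1 - p.2)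
      _ ≤ liminf Q atTop := lintegral_liminf_le' fun n => (gm n).aemeasurable
  -- conclude
  rw [EReal.tendsto_nhds_top_iff_real]
  intro M
  set M' : ℝ := max (2 * M + |m| + 1) 0 with hM'
  have hM'0 : 0 ≤ M' := le_max_right _ _
  have hQev : ∀ᶠ n in atTop, ENNReal.ofReal M' < Q n := by
    have := (le_liminf_iff).mp hQliminf (ENNReal.ofReal M') (by simp [ENNReal.ofReal_lt_top])
    exact this
  filter_upwards [hepos, hQev] with n hn hQn
  haveI : IsProbabilityMeasure (mollifiedMeasure φ ρ (e n)) :=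
    ⟨mollified_mass hφc hφpos hφsupp hφrad hφint hn⟩
  have hkey := key_identity hφc hφpos hφrad Wp hWpm hn (ρ := ρ)
  have hPn : ENNReal.ofReal M' ≤ ∫⁻ p, Wp (p.1 - p.2)
      ∂((mollifiedMeasure φ ρ (e n)).prod (mollifiedMeasure φ ρ (e n))) := by
    rw [hkey]
    -- Q n equals the iterated integral via lintegral_prod
    have hprod : Q n = ∫⁻ y, ∫⁻ y', ∫⁻ u, ∫⁻ v, ENNReal.ofReal (φ u) *
        (ENNReal.ofReal (φ v) * Wp (y - y' + e n • u - e n • v))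
        ∂volume ∂volume ∂ρ ∂ρ := by
      rw [hQ]
      exact lintegral_prod _ (gm n).aemeasurable
    rw [← hprod]
    exact hQn.le
  have hNn := hneg hn
  have hlow := energy_lower_bound _ _ M' |m| hM'0 (abs_nonneg m) hPn hNn
  have hMlt : M < (M' - |m|) / 2 := by
    have := le_max_left (2 * M + |m| + 1) 0
    have hM'ge : 2 * M + |m| + 1 ≤ M' := this
    linarith
  calc (M : EReal) < (((M' - |m|) / 2 : ℝ) : EReal) := by exact_mod_cast hMlt
    _ ≤ (((2:ℝ)⁻¹ : ℝ) : EReal) *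
        (ennrealToEReal (∫⁻ p, erealToENNReal (W (p.1 - p.2))
          ∂((mollifiedMeasure φ ρ (e n)).prod (mollifiedMeasure φ ρ (e n))))
        - ennrealToEReal (∫⁻ p, erealToENNReal (-(W (p.1 - p.2)))
          ∂((mollifiedMeasure φ ρ (e n)).prod (mollifiedMeasure φ ρ (e n))))) := hlow
    _ = interactionEnergy W (mollifiedMeasure φ ρ (e n)) := rfl

end
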